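/- arXiv:2302.04641 — 4 statements merged into one kernel-verified Lean document; each statement's English description precedes it below -/
import Mathlib

section
/- Let f : ℝ² → ℝ² be continuous, H ⊂ ℝ² compact with f(H) ⊆ H, and suppose the attractor A = ⋂_{n≥0} f^n(H) is contained in the interior of H, with f^{p+1}(H) ⊂ int H for some p ∈ ℕ. Then there exists an open set V with A ⊆ V ⊆ H and f(cl V) ⊆ V; i.e., A admits a trapping region inside H. -/
set_option maxHeartbeats 1000000

/-- If `A = ⋂ fⁿ(H)` lies in the interior of the compact forward-invariant set `H`
and some iterate `f^(p+1)(H)` lies in the interior of `H`, then `A` admits a trapping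
region inside `H`. -/
theorem attractor_has_trapping_region
    (f : (ℝ × ℝ) → (ℝ × ℝ)) (hf : Continuous f)
    (H : Set (ℝ × ℝ)) (hH : IsCompact H) (hinv : f '' H ⊆ H)
    (A : Set (ℝ × ℝ)) (hA : A = ⋂ n : ℕ, f^[n] '' H)
    (hAint : A ⊆ interior H)
    (p : ℕ) (hp : f^[p + 1] '' H ⊆ interior H) :
    ∃ V : Set (ℝ × ℝ), IsOpen V ∧ A ⊆ V ∧ V ⊆ H ∧ f '' closure V ⊆ V := by
  classical
  -- basic invariance facts
  have hsub : ∀ k : ℕ, f^[k] '' H ⊆ H := by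
    intro k
    induction k with
    | zero => simp
    | succ k ih =>
      rw [Function.iterate_succ']
      rw [Set.image_comp]
      exact (Set.image_mono (f := f) ih).trans hinv
  set K : Set (ℝ × ℝ) := f^[p + 1] '' H with hKdef
  have hKc : IsCompact K := hH.image (hf.iterate _)
  obtain ⟨δ, hδpos, hδsub⟩ := hKc.exists_thickening_subset_open isOpen_interior hp
  set ε : ℝ := δ / (p + 2) with hεdef
  have hεpos : 0 < ε := by positivity
  set T : ℕ → Set (ℝ × ℝ) := fun n => Metric.thickening (((p : ℝ) + 1 - n) * ε) K with hT
  have hrad : ∀ n, n ≤ p → 0 < ((p : ℝ) + 1 - n) * ε := by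
    intro n hn
    have : (n : ℝ) ≤ p := by exact_mod_cast hn
    nlinarith
  have hT0δ : ((p : ℝ) + 1) * ε < δ := by
    have h2 : (0 : ℝ) < (p : ℝ) + 2 := by positivity
    rw [hεdef, ← mul_div_assoc, div_lt_iff₀ h2]
    nlinarith
  have hTopen : ∀ n, IsOpen (T n) := fun n => Metric.isOpen_thickening
  -- the trapping region
  set V : Set (ℝ × ℝ) := ⋂ i ∈ Finset.range (p + 1), f^[i] ⁻¹' T i with hV
  have hVopen : IsOpen V := isOpen_biInter_finset fun i _ => (hTopen i).preimage (hf.iterate i)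
  -- A ⊆ V
  have hAK : A ⊆ K := by
    rw [hA]; exact Set.iInter_subset _ (p + 1)
  have hAinvar : ∀ i : ℕ, ∀ x ∈ A, f^[i] x ∈ A := by
    intro i x hx
    rw [hA] at hx ⊢
    rw [Set.mem_iInter] at hx ⊢
    intro n
    obtain ⟨z, hz, rfl⟩ := hx n
    have : f^[i] (f^[n] z) = f^[n] (f^[i] z) := by
      rw [← Function.iterate_add_apply, ← Function.iterate_add_apply, Nat.add_comm]
    rw [this]
    exact ⟨f^[i] z, hsub i ⟨z, hz, rfl⟩, rfl⟩
  have hAV : A ⊆ V := by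
    intro x hx
    rw [hV, Set.mem_iInter₂]
    intro i hi
    rw [Finset.mem_range, Nat.lt_succ_iff] at hi
    exact Metric.self_subset_thickening (hrad i hi) K (hAK (hAinvar i x hx))
  -- V ⊆ H
  have hT0G : T 0 ⊆ interior H := by
    have hle : ((p : ℝ) + 1 - (0 : ℕ)) * ε ≤ δ := by push_cast; linarith
    exact (Metric.thickening_mono hle K).trans hδsub
  have hVH : V ⊆ H := by
    intro x hx
    rw [hV, Set.mem_iInter₂] at hx
    have := hx 0 (by simp)
    simp only [Function.iterate_zero, Set.mem_preimage, id_eq] at this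
    exact interior_subset (hT0G this)
  -- trapping
  have hclo : ∀ n, n < p + 1 → ∀ x ∈ closure V,
      f^[n] x ∈ Metric.cthickening (((p : ℝ) + 1 - n) * ε) K := by
    intro n hn x hx
    have h1 : V ⊆ f^[n] ⁻¹' Metric.cthickening (((p : ℝ) + 1 - n) * ε) K := by
      intro y hy
      rw [hV, Set.mem_iInter₂] at hy
      exact Metric.thickening_subset_cthickening _ _ (hy n (Finset.mem_range.mpr hn))
    have h2 : closure V ⊆ f^[n] ⁻¹' Metric.cthickening (((p : ℝ) + 1 - n) * ε) K :=
      closure_minimal h1 (Metric.isClosed_cthickening.preimage (hf.iterate n))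
    exact h2 hx
  refine ⟨V, hVopen, hAV, hVH, ?_⟩
  rintro y ⟨x, hx, rfl⟩
  rw [hV, Set.mem_iInter₂]
  intro i hi
  rw [Finset.mem_range, Nat.lt_succ_iff] at hi
  show f^[i] (f x) ∈ T i
  rw [← Function.iterate_succ_apply]
  rcases lt_or_eq_of_le hi with hlt | heq
  · -- i < p : use the nesting of thickenings
    have h1 := hclo (i + 1) (by omega) x hx
    have h2 : Metric.cthickening (((p : ℝ) + 1 - ((i + 1 : ℕ) : ℝ)) * ε) K ⊆ T i := by
      apply Metric.cthickening_subset_thickening' (hrad i hi)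
      have : ((i : ℝ)) < p := by exact_mod_cast hlt
      push_cast
      nlinarith
    exact h2 h1
  · -- i = p : use f^[p+1] '' H = K
    have hx0 := hclo 0 (by omega) x hx
    simp only [Function.iterate_zero, id_eq] at hx0
    have hxH : x ∈ H := by
      have hss : Metric.cthickening (((p : ℝ) + 1 - ((0 : ℕ) : ℝ)) * ε) K ⊆ Metric.thickening δ K := by
        refine Metric.cthickening_subset_thickening' hδpos ?_ K
        push_cast; linarith
      exact interior_subset (hδsub (hss hx0))
    refine Metric.self_subset_thickening (hrad i hi) K ?_
    rw [hKdef, ← heq]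
    exact ⟨x, hxH, rfl⟩
end

section
/- Let f : X → X be continuous on a compact metric space and A = cl(W^u(X₀)) a closed invariant set on which f is transitive, such that the stable manifold W^s(X₀) of a fixed point X₀ intersects every arc of the unstable manifold W^u(X₀). If A' ⊂ A is closed with realm of attraction ρ(A') = ρ(A) ⊇ A, then A' = A; i.e., A satisfies the minimality condition (A2) in Milnor's definition of attractor provided W^u(X₀) ⊆ ρ(A'). -/
open Filter in
/-- Minimality (condition (A2) of Milnor) for `A = cl(Wᵘ(X₀))`: a closed subset `A' ⊆ A`
with the same realm of attraction must equal `A`, provided `Wᵘ(X₀) ⊆ ρ(A')`. -/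
theorem closure_unstable_minimal
    {X : Type*} [MetricSpace X] [CompactSpace X]
    (f : X ≃ₜ X) (X₀ : X) (hfix : f X₀ = X₀)
    (Wu Ws : Set X)
    (hWu : Wu = {q : X | Tendsto (fun n : ℕ => (f.symm : X → X)^[n] q) atTop (nhds X₀)})
    (hWs : Ws = {q : X | Tendsto (fun n : ℕ => (f : X → X)^[n] q) atTop (nhds X₀)})
    (A : Set X) (hA : A = closure Wu) (hinv : (f : X → X) '' A = A)
    (htrans : ∀ U V : Set X, IsOpen U → IsOpen V → (U ∩ A).Nonempty → (V ∩ A).Nonempty →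
      ∃ n : ℕ, ((f : X → X)^[n] '' (U ∩ A) ∩ (V ∩ A)).Nonempty)
    (harc : ∀ arc : Set X, arc ⊆ Wu → IsPreconnected arc → arc.Nontrivial →
      (arc ∩ Ws).Nonempty)
    (ρ : Set X → Set X)
    (hρ : ∀ F : Set X, ρ F =
      {x : X | omegaLimit atTop (fun n : ℕ => (f : X → X)^[n]) {x} ⊆ F})
    (A' : Set X) (hA' : IsClosed A') (hsub : A' ⊆ A)
    (hrealm : ρ A' = ρ A) (hAρ : A ⊆ ρ A) (hWuρ : Wu ⊆ ρ A') :
    A' = A := by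
  classical
  set F : X → X := (f : X → X) with hF
  have hFc : Continuous F := f.continuous
  have hFnc : ∀ n : ℕ, Continuous (F^[n]) := fun n => hFc.iterate n
  -- X₀ is in the unstable set
  have hsymmfix : f.symm X₀ = X₀ := by
    have h := f.symm_apply_apply X₀
    rw [← hF, hfix] at h
    exact h
  have hX0Wu : X₀ ∈ Wu := by
    rw [hWu]
    have h0 : ∀ n : ℕ, (f.symm : X → X)^[n] X₀ = X₀ := fun n =>
      Function.iterate_fixed hsymmfix n
    simp only [Set.mem_setOf_eq, h0]
    exact tendsto_const_nhds
  -- A' is nonempty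
  have hA'ne : A'.Nonempty := by
    by_contra h
    rw [Set.not_nonempty_iff_eq_empty] at h
    have hmem := hWuρ hX0Wu
    rw [hρ, h] at hmem
    have hne : (omegaLimit atTop (fun n : ℕ => F^[n]) ({X₀} : Set X)).Nonempty :=
      nonempty_omegaLimit atTop (fun n : ℕ => F^[n]) {X₀} (Set.singleton_nonempty _)
    obtain ⟨z, hz⟩ := hne
    exact (hmem hz).elim
  have hAclosed : IsClosed A := hA ▸ isClosed_closure
  -- invariance of A under iterates
  have hinvn : ∀ n : ℕ, F^[n] '' A = A := by
    intro n
    induction n with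
    | zero => simp
    | succ n ih => rw [Function.iterate_succ', Set.image_comp, ih, hinv]
  -- main claim : A ⊆ A'
  have key : A ⊆ A' := by
    intro p hp
    by_contra hpA'
    have hrpos : 0 < Metric.infDist p A' := by
      rw [← hA'.notMem_iff_infDist_pos hA'ne] at *
      exact hpA'
    set r : ℝ := Metric.infDist p A' / 2 with hr
    have hr2 : 0 < r := by positivity
    set B : Set X := Metric.ball p r with hB
    have hpB : p ∈ B := Metric.mem_ball_self hr2
    have hBopen : IsOpen B := Metric.isOpen_ball
    have hdisj : closure B ∩ A' = ∅ := by
      rw [Set.eq_empty_iff_forall_notMem]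
      rintro z ⟨hzB, hzA'⟩
      have h1 : dist z p ≤ r := by
        have := Metric.closure_ball_subset_closedBall hzB
        exact Metric.mem_closedBall.mp this
      have h2 : Metric.infDist p A' ≤ dist p z := Metric.infDist_le_dist_of_mem hzA'
      rw [dist_comm] at h2
      linarith [hrpos]
    have hBA : (B ∩ A).Nonempty := ⟨p, hpB, hp⟩
    -- one step of the recurrence construction
    have step : ∀ (V : Set X) (m : ℕ), IsOpen V → (V ∩ A).Nonempty →
        ∃ (V' : Set X) (m' : ℕ), IsOpen V' ∧ (V' ∩ A).Nonempty ∧ V' ⊆ V ∧ m < m' ∧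
          V' ⊆ F^[m'] ⁻¹' B := by
      intro V m hVopen hVA
      have hpre : (F^[m+1] ⁻¹' B ∩ A).Nonempty := by
        obtain ⟨b, hbB, hbA⟩ := hBA
        have : b ∈ F^[m+1] '' A := by rw [hinvn (m+1)]; exact hbA
        obtain ⟨a, haA, hfa⟩ := this
        exact ⟨a, by simp only [Set.mem_preimage, hfa]; exact hbB, haA⟩
      obtain ⟨n, w, hw1, hw2⟩ := htrans V (F^[m+1] ⁻¹' B) hVopen
        ((hFnc (m+1)).isOpen_preimage B hBopen) hVA hpre
      obtain ⟨y, ⟨hyV, hyA⟩, hwy⟩ := hw1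
      have hiter : F^[m+1+n] y ∈ B := by
        rw [Function.iterate_add_apply, hwy]
        exact hw2.1
      refine ⟨V ∩ F^[m+1+n] ⁻¹' B, m+1+n, hVopen.inter ((hFnc (m+1+n)).isOpen_preimage B hBopen),
        ⟨y, ⟨hyV, hiter⟩, hyA⟩, Set.inter_subset_left, by omega, Set.inter_subset_right⟩
    -- iterate the step to get a nested sequence
    let S := {q : Set X × ℕ // IsOpen q.1 ∧ (q.1 ∩ A).Nonempty ∧ q.1 ⊆ B ∧ q.1 ⊆ F^[q.2] ⁻¹' B}
    have hinit : IsOpen B ∧ (B ∩ A).Nonempty ∧ B ⊆ B ∧ B ⊆ F^[0] ⁻¹' B := by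
      refine ⟨hBopen, hBA, subset_rfl, ?_⟩
      intro x hx; simpa using hx
    have gex : ∀ q : S, ∃ q' : S, q'.1.1 ⊆ q.1.1 ∧ q.1.2 < q'.1.2 := by
      rintro ⟨⟨V, m⟩, hVo, hVA, hVB, hVpre⟩
      obtain ⟨V', m', h1, h2, h3, h4, h5⟩ := step V m hVo hVA
      exact ⟨⟨⟨V', m'⟩, h1, h2, h3.trans hVB, h5⟩, h3, h4⟩
    choose g hg1 hg2 using gex
    let seq : ℕ → S := fun k => g^[k] ⟨⟨B, 0⟩, hinit⟩
    have hseq : ∀ k, seq (k+1) = g (seq k) := by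
      intro k
      simp only [seq, Function.iterate_succ_apply']
    set V : ℕ → Set X := fun k => (seq k).1.1 with hV
    set m : ℕ → ℕ := fun k => (seq k).1.2 with hm
    have hVsub : ∀ k, V (k+1) ⊆ V k := by
      intro k; rw [hV]; simp only; rw [hseq k]; exact hg1 (seq k)
    have hmlt : ∀ k, m k < m (k+1) := by
      intro k; rw [hm]; simp only; rw [hseq k]; exact hg2 (seq k)
    have hmmono : StrictMono m := strictMono_nat_of_lt_succ hmlt
    have hVA' : ∀ k, (V k ∩ A).Nonempty := fun k => (seq k).2.2.1
    have hVpre : ∀ k, V k ⊆ F^[m k] ⁻¹' B := fun k => (seq k).2.2.2.2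
    -- intersection point
    obtain ⟨y, hy⟩ := IsCompact.nonempty_iInter_of_sequence_nonempty_isCompact_isClosed
      (fun k => closure (V k ∩ A))
      (fun k => closure_mono (Set.inter_subset_inter_left _ (hVsub k)))
      (fun k => (hVA' k).closure)
      isClosed_closure.isCompact
      (fun k => isClosed_closure)
    simp only [Set.mem_iInter] at hy
    have hyA : y ∈ A := by
      have := hy 0
      have h2 : closure (V 0 ∩ A) ⊆ A :=
        (closure_mono Set.inter_subset_right).trans hAclosed.closure_eq.subset
      exact h2 this
    have hret : ∀ k, F^[m k] y ∈ closure B := by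
      intro k
      have h1 : y ∈ closure (V k) := closure_mono Set.inter_subset_left (hy k)
      have h2 : F^[m k] '' closure (V k) ⊆ closure (F^[m k] '' V k) :=
        (hFnc (m k)).continuousOn.image_closure |>.trans (closure_mono (Set.image_mono subset_rfl))
      have h3 : F^[m k] '' V k ⊆ B := by
        rintro _ ⟨x, hx, rfl⟩; exact hVpre k hx
      exact closure_mono h3 (h2 ⟨y, h1, rfl⟩)
    -- a cluster point of the returns lies in ω(y) ∩ closure B
    have hcompB : IsCompact (closure B) := isClosed_closure.isCompact
    have hL : map (fun k => F^[m k] y) atTop ≤ Filter.principal (closure B) := by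
      rw [Filter.le_principal_iff, Filter.mem_map]
      exact Filter.Eventually.of_forall hret
    obtain ⟨z, hzB, hz⟩ := hcompB.exists_clusterPt hL
    have hzcl : MapClusterPt z atTop (fun n => F^[n] y) := by
      have h1 : map (fun k => F^[m k] y) atTop ≤ map (fun n => F^[n] y) atTop := by
        have : (fun k => F^[m k] y) = (fun n => F^[n] y) ∘ m := rfl
        rw [this, ← Filter.map_map]
        exact Filter.map_mono (Filter.map_le_iff_le_comap.mpr
          (hmmono.tendsto_atTop.le_comap))
      exact hz.mono h1
    have hzω : z ∈ omegaLimit atTop (fun n : ℕ => F^[n]) ({y} : Set X) :=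
      (mem_omegaLimit_singleton_iff_map_cluster_point atTop (fun n : ℕ => F^[n]) y z).mpr hzcl
    have hyρ : y ∈ ρ A' := by rw [hrealm]; exact hAρ hyA
    rw [hρ] at hyρ
    have hzA' : z ∈ A' := hyρ hzω
    have : z ∈ closure B ∩ A' := ⟨hzB, hzA'⟩
    rw [hdisj] at this
    exact this
  exact Set.Subset.antisymm hsub key
end

section
/- Let φ_u : ℝ → ℝ be Lipschitz with constant L < 1 and let L_set, R_set ⊆ ℝ² be two sets each of which is the graph of a Lipschitz function over the y-axis with constant L' satisfying L·L' < 1 (i.e., infinite s-curves). Suppose that for every x₀ ∈ ℝ the curve γ_u = {(x, φ_u(x))} meets each of L_set and R_set exactly once. Then the relation 'L_set ◁_u R_set' (for every such u-curve γ_u, the intersection point with L_set has smaller x-coordinate than the intersection point with R_set) defines a strict partial order on the collection of infinite s-curves, i.e., it is irreflexive and transitive. -/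
/-- An infinite `s`-curve: the graph of an `L'`-Lipschitz function over the `y`-axis. -/
def IsInfiniteSCurve (L' : NNReal) (S : Set (ℝ × ℝ)) : Prop :=
  ∃ ψ : ℝ → ℝ, LipschitzWith L' ψ ∧ S = {p : ℝ × ℝ | p.1 = ψ p.2}

/-- `S ◁_u T`: on every infinite `u`-curve (graph of an `L`-Lipschitz function over the
`x`-axis) the intersection with `S` precedes the intersection with `T` in the `x`-order. -/
def LeftOfU (L : NNReal) (S T : Set (ℝ × ℝ)) : Prop :=
  ∀ φ : ℝ → ℝ, LipschitzWith L φ →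
    ∀ p ∈ S, ∀ q ∈ T, p.2 = φ p.1 → q.2 = φ q.1 → p.1 < q.1

/-- The relation `◁_u` is a strict partial order (irreflexive and transitive) on the
collection of infinite `s`-curves. -/
theorem leftOf_strict_partial_order (L L' : NNReal)
    (hL : (L : ℝ) < 1) (hprod : (L : ℝ) * (L' : ℝ) < 1) :
    (∀ S : Set (ℝ × ℝ), IsInfiniteSCurve L' S → ¬ LeftOfU L S S) ∧
    (∀ S T U : Set (ℝ × ℝ), IsInfiniteSCurve L' S → IsInfiniteSCurve L' T →
      IsInfiniteSCurve L' U → LeftOfU L S T → LeftOfU L T U → LeftOfU L S U) := by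
  constructor
  · rintro S ⟨ψ, hψ, rfl⟩ h
    have hp : ((ψ 0, (0:ℝ)) : ℝ × ℝ) ∈ {p : ℝ × ℝ | p.1 = ψ p.2} := rfl
    exact lt_irrefl _ (h (fun _ => (0:ℝ)) (LipschitzWith.const' 0 |>.weaken (zero_le : (0 : NNReal) ≤ L))
      _ hp _ hp rfl rfl)
  · rintro S T U hS ⟨ψ, hψ, rfl⟩ hU hST hTU φ hφ p hp q hq hpφ hqφ
    -- find fixed point of x ↦ ψ (φ x)
    have hcomp : LipschitzWith (L' * L) (ψ ∘ φ) := hψ.comp hφ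
    have hlt : (L' * L : NNReal) < 1 := by
      rw [← NNReal.coe_lt_coe]
      push_cast
      linarith [mul_comm (L:ℝ) (L':ℝ)]
    have hc : ContractingWith (L' * L) (ψ ∘ φ) := ⟨hlt, hcomp⟩
    obtain ⟨x, hx⟩ : ∃ x : ℝ, ψ (φ x) = x := ⟨hc.fixedPoint _, hc.fixedPoint_isFixedPt⟩
    have hr : ((x, φ x) : ℝ × ℝ) ∈ {p : ℝ × ℝ | p.1 = ψ p.2} := hx.symm
    exact lt_trans (hST φ hφ p hp _ hr hpφ rfl) (hTU φ hφ _ hr q hq rfl hqφ)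
end

section
/- Let λ > √2 and let γ ⊂ R be a nondegenerate C¹ u-curve in a bounded region R ⊂ ℝ², for a piecewise C¹ map f whose restriction to each of two half-planes is a C¹ diffeomorphism expanding unstable-cone vectors by factor λ, with invariant unstable cone family contained in the universal cone with coefficient α_u > 0. Suppose each iterate f^{2i}(γ) consists of at most 2^i smooth u-curves each contained in R. Then there exists i ∈ ℕ such that f^i(γ) intersects the divider curve ℝ₀ (the common boundary of the two half-planes). -/
open Set in
/-- A smooth `u`-curve contained in the bounded region `R`: a `C¹` curve whose tangent
vectors lie in the universal unstable cone with coefficient `αu`. -/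
def IsUCurveIn (αu : ℝ) (R S : Set (EuclideanSpace ℝ (Fin 2))) : Prop :=
  ∃ c c' : ℝ → EuclideanSpace ℝ (Fin 2),
    (∀ t ∈ Icc (0:ℝ) 1, HasDerivAt c (c' t) t) ∧
    ContinuousOn c' (Icc (0:ℝ) 1) ∧
    (∀ t ∈ Icc (0:ℝ) 1, αu * ‖c' t‖ ≤ |c' t 0|) ∧
    S = c '' Icc (0:ℝ) 1 ∧ S ⊆ R

open Set

lemma abs_coord_le_norm (v : EuclideanSpace ℝ (Fin 2)) (i : Fin 2) : |v i| ≤ ‖v‖ := by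
  calc |v i| = Real.sqrt (‖v i‖ ^ 2) := by
        rw [Real.norm_eq_abs, Real.sqrt_sq_eq_abs, abs_abs]
    _ ≤ Real.sqrt (∑ j, ‖v j‖ ^ 2) :=
        Real.sqrt_le_sqrt (Finset.single_le_sum (fun j _ => sq_nonneg ‖v j‖)
          (Finset.mem_univ i))
    _ = ‖v‖ := (EuclideanSpace.norm_eq v).symm


open Set in
/-- For `λ > √2`, some iterate of a nondegenerate `u`-curve in the bounded region `R`
must intersect the divider `Z` (the common boundary of the two half-planes on which the
piecewise `C¹` map `f` is a `C¹` diffeomorphism expanding unstable cone vectors). -/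
theorem iterate_hits_divider
    (lam αu : ℝ) (hlam : Real.sqrt 2 < lam) (hαu : 0 < αu)
    (R : Set (EuclideanSpace ℝ (Fin 2))) (hR : Bornology.IsBounded R)
    (Z Hp Hm : Set (EuclideanSpace ℝ (Fin 2)))
    (hpcl : IsClosed Hp) (hmcl : IsClosed Hm)
    (hcover : Hp ∪ Hm = univ) (hZ : Hp ∩ Hm = Z)
    (f fp fm : EuclideanSpace ℝ (Fin 2) → EuclideanSpace ℝ (Fin 2))
    (hfp : ContDiff ℝ 1 fp) (hfm : ContDiff ℝ 1 fm)
    (hfpbij : Function.Bijective fp) (hfmbij : Function.Bijective fm)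
    (heqp : ∀ z ∈ Hp, f z = fp z) (heqm : ∀ z ∈ Hm, f z = fm z)
    (hconep : ∀ z w, αu * ‖w‖ ≤ |w 0| →
      αu * ‖fderiv ℝ fp z w‖ ≤ |fderiv ℝ fp z w 0| ∧ lam * ‖w‖ ≤ ‖fderiv ℝ fp z w‖)
    (hconem : ∀ z w, αu * ‖w‖ ≤ |w 0| →
      αu * ‖fderiv ℝ fm z w‖ ≤ |fderiv ℝ fm z w 0| ∧ lam * ‖w‖ ≤ ‖fderiv ℝ fm z w‖)
    (γ γ' : ℝ → EuclideanSpace ℝ (Fin 2))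
    (hγR : γ '' Icc (0:ℝ) 1 ⊆ R)
    (hderiv : ∀ t ∈ Icc (0:ℝ) 1, HasDerivAt γ (γ' t) t)
    (hcont : ContinuousOn γ' (Icc (0:ℝ) 1))
    (hcone : ∀ t ∈ Icc (0:ℝ) 1, αu * ‖γ' t‖ ≤ |γ' t 0|)
    (hnondeg : ∃ t ∈ Icc (0:ℝ) 1, γ' t ≠ 0)
    (hpieces : ∀ i : ℕ, (∀ j, j ≤ 2 * i → (f^[j] '' (γ '' Icc (0:ℝ) 1)) ∩ Z = ∅) →
      ∃ (k : ℕ) (P : Fin k → Set (EuclideanSpace ℝ (Fin 2))), k ≤ 2 ^ i ∧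
        (f^[2 * i] '' (γ '' Icc (0:ℝ) 1) = ⋃ j, P j) ∧ ∀ j, IsUCurveIn αu R (P j)) :
    ∃ i : ℕ, ((f^[i] '' (γ '' Icc (0:ℝ) 1)) ∩ Z).Nonempty := by
  by_contra hcon
  push_neg at hcon
  have hempty : ∀ i, (f^[i] '' (γ '' Icc (0:ℝ) 1)) ∩ Z = ∅ := hcon
  have horb : ∀ z ∈ γ '' Icc (0:ℝ) 1, ∀ j, f^[j] z ∉ Z := by
    intro z hz j hjZ
    have : f^[j] z ∈ (f^[j] '' (γ '' Icc (0:ℝ) 1)) ∩ Z :=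
      ⟨mem_image_of_mem _ hz, hjZ⟩
    rw [hempty j] at this
    exact this
  have hsqrt2 : (0:ℝ) < Real.sqrt 2 := Real.sqrt_pos.mpr (by norm_num)
  have hlam0 : (0:ℝ) < lam := hsqrt2.trans hlam
  -- single step
  have hstep : ∀ z ∉ Z, ∃ D : EuclideanSpace ℝ (Fin 2) →L[ℝ] EuclideanSpace ℝ (Fin 2),
      HasFDerivAt f D z ∧
      ∀ v, αu * ‖v‖ ≤ |v 0| → αu * ‖D v‖ ≤ |D v 0| ∧ lam * ‖v‖ ≤ ‖D v‖ := by
    intro z hzZ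
    by_cases hp : z ∈ Hp
    · have hm : z ∉ Hm := fun hm => hzZ (hZ ▸ ⟨hp, hm⟩)
      refine ⟨fderiv ℝ fp z, ?_, fun v hv => hconep z v hv⟩
      have hev : f =ᶠ[nhds z] fp := by
        filter_upwards [hmcl.isOpen_compl.mem_nhds hm] with w hw
        have hwp : w ∈ Hp := by
          have : w ∈ Hp ∪ Hm := hcover ▸ mem_univ w
          rcases this with h | h
          · exact h
          · exact absurd h hw
        exact heqp w hwp
      exact ((hfp.differentiable one_ne_zero z).hasFDerivAt).congr_of_eventuallyEq hev
    · have hm : z ∈ Hm := by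
        have : z ∈ Hp ∪ Hm := hcover ▸ mem_univ z
        rcases this with h | h
        · exact absurd h hp
        · exact h
      refine ⟨fderiv ℝ fm z, ?_, fun v hv => hconem z v hv⟩
      have hev : f =ᶠ[nhds z] fm := by
        filter_upwards [hpcl.isOpen_compl.mem_nhds hp] with w hw
        have hwm : w ∈ Hm := by
          have : w ∈ Hp ∪ Hm := hcover ▸ mem_univ w
          rcases this with h | h
          · exact absurd h hw
          · exact h
        exact heqm w hwm
      exact ((hfm.differentiable one_ne_zero z).hasFDerivAt).congr_of_eventuallyEq hev
  -- iterated derivative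
  have hiter : ∀ n : ℕ, ∀ z, (∀ j, f^[j] z ∉ Z) →
      ∃ D : EuclideanSpace ℝ (Fin 2) →L[ℝ] EuclideanSpace ℝ (Fin 2),
      HasFDerivAt f^[n] D z ∧
      ∀ v, αu * ‖v‖ ≤ |v 0| → αu * ‖D v‖ ≤ |D v 0| ∧ lam ^ n * ‖v‖ ≤ ‖D v‖ := by
    intro n
    induction n with
    | zero =>
      intro z _
      refine ⟨ContinuousLinearMap.id ℝ _, ?_, fun v hv => ⟨hv, by simp⟩⟩
      simpa using hasFDerivAt_id z
    | succ n ih =>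
      intro z hz
      obtain ⟨D, hD, hDv⟩ := ih z hz
      obtain ⟨G, hG, hGv⟩ := hstep (f^[n] z) (hz n)
      refine ⟨G.comp D, ?_, ?_⟩
      · rw [Function.iterate_succ']
        exact hG.comp z hD
      · intro v hv
        obtain ⟨hc, he⟩ := hDv v hv
        obtain ⟨hc', he'⟩ := hGv (D v) hc
        refine ⟨by simpa using hc', ?_⟩
        have h1 : lam * (lam ^ n * ‖v‖) ≤ lam * ‖D v‖ :=
          mul_le_mul_of_nonneg_left he hlam0.le
        have h2 : lam * ‖D v‖ ≤ ‖G (D v)‖ := he'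
        calc lam ^ (n + 1) * ‖v‖ = lam * (lam ^ n * ‖v‖) := by ring
          _ ≤ ‖G (D v)‖ := h1.trans h2
          _ = ‖(G.comp D) v‖ := by simp
  -- a nondegenerate subinterval
  obtain ⟨t₀, ht₀, hne⟩ := hnondeg
  have hm0 : 0 < ‖γ' t₀‖ := norm_pos_iff.mpr hne
  set m : ℝ := ‖γ' t₀‖ with hmdef
  obtain ⟨δ, hδ0, hδ⟩ := Metric.continuousWithinAt_iff.mp (hcont t₀ ht₀) (m / 2)
    (by positivity)
  set a : ℝ := max 0 (t₀ - δ / 2) with hadef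
  set b : ℝ := min 1 (t₀ + δ / 2) with hbdef
  have hab : a < b := by
    rcases lt_or_eq_of_le ht₀.2 with h1 | h1
    · have ha : a ≤ t₀ := max_le ht₀.1 (by linarith)
      have hb : t₀ < b := lt_min h1 (by linarith)
      linarith
    · have hb : b = 1 := by rw [hbdef, min_eq_left (by linarith)]
      have ha : a < 1 := max_lt (by norm_num) (by linarith)
      linarith
  have hsub : Icc a b ⊆ Icc (0:ℝ) 1 := fun t ht =>
    ⟨le_trans (le_max_left 0 _) ht.1, le_trans ht.2 (min_le_left 1 _)⟩
  have hmt : ∀ t ∈ Icc a b, m / 2 ≤ ‖γ' t‖ := by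
    intro t ht
    have h1 : t₀ - δ / 2 ≤ t := le_trans (le_max_right 0 _) ht.1
    have h2 : t ≤ t₀ + δ / 2 := le_trans ht.2 (min_le_right 1 _)
    have hd : dist t t₀ < δ := by
      rw [Real.dist_eq, abs_sub_lt_iff]; constructor <;> linarith
    have hlt := hδ (hsub ht) hd
    have htri : ‖γ' t₀‖ - ‖γ' t‖ ≤ ‖γ' t₀ - γ' t‖ := norm_sub_norm_le _ _
    have heq : ‖γ' t₀ - γ' t‖ = dist (γ' t) (γ' t₀) := by
      rw [dist_eq_norm, norm_sub_rev]
    rw [heq] at htri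
    linarith
  -- the constant
  set K : ℝ := αu * (m / 2) * (b - a) with hKdef
  have hK0 : 0 < K := by
    have : 0 < b - a := by linarith
    positivity
  have hlamsq : (1:ℝ) < lam ^ 2 := by
    have h2 : Real.sqrt 2 ^ 2 = 2 := Real.sq_sqrt (by norm_num)
    nlinarith [hsqrt2]
  obtain ⟨i, hi⟩ := pow_unbounded_of_one_lt (Metric.diam R / K) hlamsq
  -- apply hpieces at i to get containment in R
  obtain ⟨k, P, hk, hunion, hP⟩ := hpieces i (fun j _ => hempty j)
  have hsubR : f^[2 * i] '' (γ '' Icc (0:ℝ) 1) ⊆ R := by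
    rw [hunion]
    refine iUnion_subset fun j => ?_
    obtain ⟨c, c', _, _, _, _, hcR⟩ := hP j
    exact hcR
  set n : ℕ := 2 * i with hndef
  set X : ℝ → ℝ := fun s => (f^[n] (γ s)) 0 with hXdef
  have key : ∀ t ∈ Icc a b, ∃ d : ℝ, HasDerivAt X d t ∧ αu * (lam ^ n * (m / 2)) ≤ |d| := by
    intro t ht
    have htI := hsub ht
    obtain ⟨D, hD, hDv⟩ := hiter n (γ t) (horb _ (mem_image_of_mem γ htI) )
    have hcomp : HasDerivAt (fun s => f^[n] (γ s)) (D (γ' t)) t :=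
      hD.comp_hasDerivAt t (hderiv t htI)
    have hX : HasDerivAt X (D (γ' t) 0) t := by
      have := (EuclideanSpace.proj (0 : Fin 2)).hasFDerivAt.comp_hasDerivAt t hcomp
      exact this
    refine ⟨D (γ' t) 0, hX, ?_⟩
    obtain ⟨hcD, heD⟩ := hDv (γ' t) (hcone t htI)
    have h1 : lam ^ n * (m / 2) ≤ lam ^ n * ‖γ' t‖ :=
      mul_le_mul_of_nonneg_left (hmt t ht) (by positivity)
    have h2 : αu * (lam ^ n * (m / 2)) ≤ αu * ‖D (γ' t)‖ := by
      have := h1.trans heD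
      exact mul_le_mul_of_nonneg_left this hαu.le
    exact h2.trans hcD
  choose! d hd1 hd2 using key
  have hXcont : ContinuousOn X (Icc a b) := fun t ht =>
    (hd1 t ht).continuousAt.continuousWithinAt
  obtain ⟨ξ, hξ, hslope⟩ := exists_hasDerivAt_eq_slope X d hab hXcont
    (fun t ht => hd1 t (Ioo_subset_Icc_self ht))
  have hξab : ξ ∈ Icc a b := Ioo_subset_Icc_self hξ
  -- lower bound for |X b - X a|
  have hba : (0:ℝ) < b - a := by linarith
  have hlow : αu * (lam ^ n * (m / 2)) * (b - a) ≤ |X b - X a| := by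
    have := hd2 ξ hξab
    rw [hslope] at this
    rw [abs_div] at this
    rw [abs_of_pos hba] at this
    calc αu * (lam ^ n * (m / 2)) * (b - a) ≤ |X b - X a| / (b - a) * (b - a) :=
          mul_le_mul_of_nonneg_right this hba.le
      _ = |X b - X a| := div_mul_cancel₀ _ hba.ne'
  -- upper bound
  have hain : f^[n] (γ a) ∈ R := hsubR (mem_image_of_mem _ (mem_image_of_mem γ (hsub ⟨le_refl a, hab.le⟩)))
  have hbin : f^[n] (γ b) ∈ R := hsubR (mem_image_of_mem _ (mem_image_of_mem γ (hsub ⟨hab.le, le_refl b⟩)))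
  have hup : |X b - X a| ≤ Metric.diam R := by
    have h1 : X b - X a = (f^[n] (γ b) - f^[n] (γ a)) 0 := by
      simp [hXdef, PiLp.sub_apply]
    rw [h1]
    calc |(f^[n] (γ b) - f^[n] (γ a)) 0| ≤ ‖f^[n] (γ b) - f^[n] (γ a)‖ :=
          abs_coord_le_norm _ 0
      _ = dist (f^[n] (γ b)) (f^[n] (γ a)) := (dist_eq_norm _ _).symm
      _ ≤ Metric.diam R := Metric.dist_le_diam_of_mem hR hbin hain
  -- contradiction
  have hpow : lam ^ n = (lam ^ 2) ^ i := by rw [hndef, pow_mul]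
  have hKlam : Metric.diam R < K * lam ^ n := by
    rw [hpow]
    calc Metric.diam R = Metric.diam R / K * K := (div_mul_cancel₀ _ hK0.ne').symm
      _ < (lam ^ 2) ^ i * K := by
          exact mul_lt_mul_of_pos_right hi hK0
      _ = K * (lam ^ 2) ^ i := mul_comm _ _
  have : K * lam ^ n ≤ Metric.diam R := by
    have : K * lam ^ n = αu * (lam ^ n * (m / 2)) * (b - a) := by rw [hKdef]; ring
    rw [this]
    exact hlow.trans hup
  linarith
end
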